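/- Let p : X → Y be a closed continuous map, where X is a path-connected normal topological space and Y is a metrizable space with covering dimension dim Y ≤ n. If for every y ∈ Y the fiber p⁻¹(y) has an open neighborhood in X that is X-contractible, then cat X ≤ n. (In particular cat* p = 0 under these hypotheses.) -/

import Mathlib

open Set Topology

/-- A subset `U` of a topological space `X` is `X`-contractible if the inclusion
`U ↪ X` is nullhomotopic (i.e. `U` can be contracted to a point within `X`). -/
def ContractibleIn {X : Type*} [TopologicalSpace X] (U : Set X) : Prop :=
  ContinuousMap.Nullhomotopic (⟨fun x => (x : X), continuous_subtype_val⟩ : C(U, X))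

/-- `cat X ≤ n` : the Lusternik–Schnirelmann category of `X` is at most `n`, i.e.
`X` admits an open cover by `n + 1` `X`-contractible sets. -/
def CatLE (X : Type*) [TopologicalSpace X] (n : ℕ) : Prop :=
  ∃ U : Fin (n + 1) → Set X,
    (∀ i, IsOpen (U i)) ∧ (∀ i, ContractibleIn (U i)) ∧ (⋃ i, U i) = univ

/-- A family `U` of subsets of `X` is uniformly `f`-contractible if every `y ∈ Y` has a
neighborhood `V` such that each `U i ∩ f ⁻¹' V` is `X`-contractible. -/
def UnifContractible {X Y : Type*} [TopologicalSpace X] [TopologicalSpace Y]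
    (f : X → Y) {ι : Type*} (U : ι → Set X) : Prop :=
  ∀ y : Y, ∃ V ∈ 𝓝 y, ∀ i, ContractibleIn (U i ∩ f ⁻¹' V)

/-- `cat* f ≤ n` : `X` admits a uniformly `f`-contractible open cover by `n + 1` sets. -/
def CatStarLE {X Y : Type*} [TopologicalSpace X] [TopologicalSpace Y]
    (f : X → Y) (n : ℕ) : Prop :=
  ∃ U : Fin (n + 1) → Set X,
    (∀ i, IsOpen (U i)) ∧ (⋃ i, U i) = univ ∧ UnifContractible f U

/-- `dim Y ≤ n` : every open cover of `Y` admits an open refinement of multiplicity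
at most `n + 1` (covering dimension). -/
def CovDimLE (Y : Type*) [TopologicalSpace Y] (n : ℕ) : Prop :=
  ∀ C : Set (Set Y), (∀ c ∈ C, IsOpen c) → ⋃₀ C = univ →
    ∃ W : Set (Set Y), (∀ w ∈ W, IsOpen w) ∧ ⋃₀ W = univ ∧
      (∀ w ∈ W, ∃ c ∈ C, w ⊆ c) ∧ ∀ y : Y, {w ∈ W | y ∈ w}.encard ≤ (n + 1 : ℕ)

/-!
Since `p` is closed, every fiber neighbourhood contains a tube `p⁻¹ V`, so `Y` is covered by
open sets `V` with `p⁻¹ V` contractible in `X`; this alone gives `cat* p = 0`. Refine this cover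
to one of order at most `n + 1` and take a subordinate partition of unity `ρ`. For a finite set
`S` of indices, the open set where the `ρ w`, `w ∈ S`, are positive and exceed every other `ρ w'`
lies in each `w ∈ S`, and two such sets with `|S| = |T|`, `S ≠ T` are disjoint. Grouping them by
`|S| ∈ {1, …, n + 1}` covers `Y` by `n + 1` open sets, each a disjoint union of open sets with
contractible preimages; in a path-connected `X` such a disjoint union is contractible in `X`.
-/

section ContractibleIn

open Function

variable {X : Type*} [TopologicalSpace X]

theorem ContractibleIn.mono {S U : Set X} (hU : ContractibleIn U) (hSU : S ⊆ U) :
    ContractibleIn S :=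
  hU.comp_left (ContinuousMap.inclusion hSU)

theorem ContractibleIn.homotopic_const [PathConnectedSpace X] {U : Set X}
    (hU : ContractibleIn U) (x₀ : X) :
    (⟨fun x => (x : X), continuous_subtype_val⟩ : C(U, X)).Homotopic
      (ContinuousMap.const U x₀) := by
  obtain ⟨x, hx⟩ := hU
  obtain ⟨γ⟩ := PathConnectedSpace.joined x x₀
  exact hx.trans ⟨γ.toHomotopyConst⟩

/-- Path-connectedness lets all the contractions end at one point; they then glue along the
open partition. -/
theorem ContractibleIn.iUnion [PathConnectedSpace X] {ι : Type*} {P : ι → Set X}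
    (hP : ∀ i, IsOpen (P i)) (hdisj : Pairwise (Disjoint on P))
    (hc : ∀ i, ContractibleIn (P i)) : ContractibleIn (⋃ i, P i) := by
  obtain ⟨x₀⟩ : Nonempty X := PathConnectedSpace.nonempty
  let H i := ((hc i).homotopic_const x₀).some
  let S i : Set (unitInterval × ↥(⋃ i, P i)) := univ ×ˢ (Subtype.val ⁻¹' P i)
  let φ i : C(S i, X) :=
    ⟨fun q => H i (q.1.1, ⟨q.1.2, q.2.2⟩), by fun_prop⟩
  have hφ i j (q) (hi : q ∈ S i) (hj : q ∈ S j) : φ i ⟨q, hi⟩ = φ j ⟨q, hj⟩ := by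
    obtain rfl : i = j := by
      by_contra hij
      exact (hdisj hij).notMem_of_mem_left hi.2 hj.2
    rfl
  have hS q : ∃ i, S i ∈ 𝓝 q := by
    obtain ⟨i, hi⟩ := mem_iUnion.1 q.2.2
    exact ⟨i, (isOpen_univ.prod ((hP i).preimage continuous_subtype_val)).mem_nhds ⟨trivial, hi⟩⟩
  have hF (t : unitInterval) (x : ↥(⋃ i, P i)) :
      ∃ i, ∃ hx : (x : X) ∈ P i, ContinuousMap.liftCover S φ hφ hS (t, x) = H i (t, ⟨x, hx⟩) := by
    obtain ⟨i, hi⟩ := mem_iUnion.1 x.2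
    exact ⟨i, hi, ContinuousMap.liftCover_coe (⟨(t, x), trivial, hi⟩ : S i)⟩
  refine ⟨x₀, ⟨{ toContinuousMap := ContinuousMap.liftCover S φ hφ hS
                 map_zero_left := fun x => ?_
                 map_one_left := fun x => ?_ }⟩⟩
  · obtain ⟨i, hi, h⟩ := hF 0 x
    simp [h]
  · obtain ⟨i, hi, h⟩ := hF 1 x
    simp [h]

end ContractibleIn

theorem IsClosedMap.exists_mem_nhds_preimage_subset {X Y : Type*} [TopologicalSpace X]
    [TopologicalSpace Y] {f : X → Y} (hf : IsClosedMap f) {U : Set X} (hU : IsOpen U) {y : Y}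
    (hy : f ⁻¹' {y} ⊆ U) : ∃ V ∈ 𝓝 y, f ⁻¹' V ⊆ U :=
  Filter.mem_comap.1 (hf.comap_nhds_le (hU.mem_nhdsSet.2 hy))

namespace PartitionOfUnity

variable {ι X : Type*} [TopologicalSpace X] {s : Set X} (ρ : PartitionOfUnity ι X s)

def dominantSet (S : Finset ι) : Set X :=
  {x | ∀ i ∈ S, 0 < ρ i x ∧ ∀ j ∉ S, ρ j x < ρ i x}

theorem isOpen_dominantSet (S : Finset ι) : IsOpen (ρ.dominantSet S) := by
  classical
  refine isOpen_iff_mem_nhds.2 fun x₀ hx₀ => ?_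
  have hlt : ∀ i ∈ S, ∀ j ∈ ρ.fintsupport x₀ \ S, ∀ᶠ x in 𝓝 x₀, ρ j x < ρ i x :=
    fun i hi j hj => (ρ j).continuous.continuousAt.eventually_lt (ρ i).continuous.continuousAt
      ((hx₀ i hi).2 j (Finset.mem_sdiff.1 hj).2)
  have hpos : ∀ i ∈ S, ∀ᶠ x in 𝓝 x₀, 0 < ρ i x :=
    fun i hi => continuousAt_const.eventually_lt (ρ i).continuous.continuousAt (hx₀ i hi).1
  filter_upwards [ρ.eventually_finsupport_subset x₀, (Filter.eventually_all_finset S).2 hpos,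
    (Filter.eventually_all_finset S).2 fun i hi =>
      (Filter.eventually_all_finset _).2 (hlt i hi)] with x hsupp hpos hlt
  refine fun i hi => ⟨hpos i hi, fun j hj => ?_⟩
  by_cases hjx : j ∈ ρ.finsupport x
  · exact hlt i hi j (Finset.mem_sdiff.2 ⟨hsupp hjx, hj⟩)
  · rw [ρ.mem_finsupport, Function.notMem_support] at hjx
    exact hjx ▸ hpos i hi

theorem disjoint_dominantSet {S T : Finset ι} (hcard : S.card = T.card) (hST : S ≠ T) :
    Disjoint (ρ.dominantSet S) (ρ.dominantSet T) := by
  refine Set.disjoint_left.2 fun x hS hT => ?_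
  obtain ⟨i, hiS, hiT⟩ :=
    Finset.not_subset.1 fun h => hST (Finset.eq_of_subset_of_card_le h hcard.ge)
  obtain ⟨j, hjT, hjS⟩ :=
    Finset.not_subset.1 fun h => hST (Finset.eq_of_subset_of_card_le h hcard.le).symm
  exact lt_asymm ((hS i hiS).2 j hjS) ((hT j hjT).2 i hiT)

theorem dominantSet_subset_support {S : Finset ι} {i : ι} (hi : i ∈ S) :
    ρ.dominantSet S ⊆ Function.support (ρ i) :=
  fun _ hx => (hx i hi).1.ne'

theorem mem_dominantSet_finsupport (x : X) : x ∈ ρ.dominantSet (ρ.finsupport x) := by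
  intro i hi
  have hpos : 0 < ρ i x := (ρ.nonneg i x).lt_of_ne' ((ρ.mem_finsupport x).1 hi)
  refine ⟨hpos, fun j hj => ?_⟩
  rwa [Function.notMem_support.1 fun h => hj ((ρ.mem_finsupport x).2 h)]

end PartitionOfUnity

theorem exists_pairwiseDisjoint_refinement_of_encard_le {Y : Type*} [TopologicalSpace Y]
    [NormalSpace Y] [ParacompactSpace Y] {n : ℕ} {W : Set (Set Y)} (hWo : ∀ w ∈ W, IsOpen w)
    (hW : ⋃₀ W = univ) (hmult : ∀ y, {w ∈ W | y ∈ w}.encard ≤ (n + 1 : ℕ)) :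
    ∃ G : Fin (n + 1) → Set (Set Y), (∀ i, ∀ g ∈ G i, IsOpen g ∧ ∃ w ∈ W, g ⊆ w) ∧
      (∀ i, (G i).PairwiseDisjoint id) ∧ ∀ y, ∃ i, ∃ g ∈ G i, y ∈ g := by
  obtain ⟨ρ, hρ⟩ := PartitionOfUnity.exists_isSubordinate isClosed_univ
    (fun w : W => (w : Set Y)) (fun w => hWo w w.2) (by rw [← sUnion_eq_iUnion, hW])
  have hsupp (w : W) : Function.support (ρ w) ⊆ w := subset_closure.trans (hρ w)
  have hcard y : (ρ.finsupport y).card ≤ n + 1 := by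
    have h : Subtype.val '' (ρ.finsupport y : Set W) ⊆ {w ∈ W | y ∈ w} := by
      rintro _ ⟨w, hw, rfl⟩
      exact ⟨w.2, hsupp w ((ρ.mem_finsupport y).1 hw)⟩
    have := (encard_mono h).trans (hmult y)
    rwa [Subtype.val_injective.injOn.encard_image, encard_coe_eq_coe_finsetCard,
      Nat.cast_le] at this
  refine ⟨fun i => ρ.dominantSet '' {S | S.card = i + 1}, ?_, ?_, fun y => ?_⟩
  · rintro i _ ⟨S, hS, rfl⟩
    obtain ⟨w, hw⟩ : S.Nonempty := Finset.card_pos.1 (by rw [hS]; omega)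
    exact ⟨ρ.isOpen_dominantSet S, w, w.2, (ρ.dominantSet_subset_support hw).trans (hsupp w)⟩
  · rintro i _ ⟨S, hS, rfl⟩ _ ⟨T, hT, rfl⟩ hne
    exact ρ.disjoint_dominantSet (hS.trans hT.symm) fun h => hne (congrArg _ h)
  · obtain ⟨w, hw⟩ := ρ.exists_pos (mem_univ y)
    have hpos : 0 < (ρ.finsupport y).card :=
      Finset.card_pos.2 ⟨w, (ρ.mem_finsupport y).2 hw.ne'⟩
    refine ⟨⟨(ρ.finsupport y).card - 1, by have := hcard y; omega⟩, _,
      ⟨ρ.finsupport y, (Nat.sub_add_cancel hpos).symm, rfl⟩, ρ.mem_dominantSet_finsupport y⟩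

theorem catLE_of_covDimLE_of_forall_nhds_contractibleIn {X Y : Type*} [TopologicalSpace X]
    [TopologicalSpace Y] [PathConnectedSpace X] [NormalSpace Y] [ParacompactSpace Y]
    {p : X → Y} (hp : Continuous p) {n : ℕ} (hdim : CovDimLE Y n)
    (htube : ∀ y, ∃ V ∈ 𝓝 y, ContractibleIn (p ⁻¹' V)) : CatLE X n := by
  obtain ⟨W, hWo, hWcov, hWref, hWmult⟩ :=
    hdim {V | IsOpen V ∧ ContractibleIn (p ⁻¹' V)} (fun _ hV => hV.1) <|
      eq_univ_of_forall fun y => by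
        obtain ⟨V, hV, hVc⟩ := htube y
        exact ⟨interior V, ⟨isOpen_interior, hVc.mono (preimage_mono interior_subset)⟩,
          mem_interior_iff_mem_nhds.2 hV⟩
  obtain ⟨G, hGref, hGdisj, hGcov⟩ :=
    exists_pairwiseDisjoint_refinement_of_encard_le hWo hWcov hWmult
  refine ⟨fun i => p ⁻¹' ⋃₀ G i, fun i => ?_, fun i => ?_, ?_⟩
  · exact (isOpen_sUnion fun g hg => (hGref i g hg).1).preimage hp
  · dsimp only
    rw [sUnion_eq_iUnion, preimage_iUnion]
    refine ContractibleIn.iUnion (fun g => (hGref i g g.2).1.preimage hp)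
      (fun g g' hne => ((hGdisj i) g.2 g'.2 (Subtype.coe_ne_coe.2 hne)).preimage p) fun g => ?_
    obtain ⟨w, hw, hgw⟩ := (hGref i g g.2).2
    obtain ⟨V, hV, hwV⟩ := hWref w hw
    exact hV.2.mono (preimage_mono (hgw.trans hwV))
  · exact eq_univ_of_forall fun x => mem_iUnion.2 (hGcov (p x))

theorem catLE_of_isClosedMap_fiber_contractible_general
    {X Y : Type*} [TopologicalSpace X] [TopologicalSpace Y]
    [PathConnectedSpace X] [TopologicalSpace.MetrizableSpace Y]
    (p : X → Y) (hp : Continuous p) (hclosed : IsClosedMap p) (n : ℕ)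
    (hdim : CovDimLE Y n)
    (hfib : ∀ y : Y, ∃ U : Set X, IsOpen U ∧ p ⁻¹' {y} ⊆ U ∧ ContractibleIn U) :
    CatLE X n ∧ CatStarLE p 0 := by
  have htube y : ∃ V ∈ 𝓝 y, ContractibleIn (p ⁻¹' V) := by
    obtain ⟨U, hUo, hyU, hUc⟩ := hfib y
    obtain ⟨V, hV, hVU⟩ := hclosed.exists_mem_nhds_preimage_subset hUo hyU
    exact ⟨V, hV, hUc.mono hVU⟩
  have : ParacompactSpace Y := by
    let := TopologicalSpace.metrizableSpaceMetric Y
    infer_instance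
  refine ⟨catLE_of_covDimLE_of_forall_nhds_contractibleIn hp hdim htube,
    fun _ => univ, fun _ => isOpen_univ, iUnion_const _, fun y => ?_⟩
  obtain ⟨V, hV, hVc⟩ := htube y
  exact ⟨V, hV, fun _ => hVc.mono inter_subset_right⟩

/-- Corollary 3.3: if `p : X → Y` is a closed continuous map, `dim Y ≤ n`, and every
fiber of `p` has an `X`-contractible open neighborhood, then `cat X ≤ n`
(and in particular `cat* p = 0`). -/
theorem catLE_of_isClosedMap_fiber_contractible
    {X Y : Type*} [TopologicalSpace X] [TopologicalSpace Y]
    [PathConnectedSpace X] [NormalSpace X] [TopologicalSpace.MetrizableSpace Y]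
    (p : X → Y) (hp : Continuous p) (hclosed : IsClosedMap p) (n : ℕ)
    (hdim : CovDimLE Y n)
    (hfib : ∀ y : Y, ∃ U : Set X, IsOpen U ∧ p ⁻¹' {y} ⊆ U ∧ ContractibleIn U) :
    CatLE X n ∧ CatStarLE p 0 :=
  catLE_of_isClosedMap_fiber_contractible_general p hp hclosed n hdim hfib
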